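/- Let M = ⊕_{n≥0} M(n) be an admissible V-module. Then o((L(-1) + L(0))v) = 0 as an operator on M for every homogeneous v ∈ V, and consequently the map a ↦ o(a)|_{M(0)} induces an algebra homomorphism from A(V) to End(M(0)). -/

import Mathlib

/-- Generalized binomial coefficient `C(n, k)` for `n : ℤ`, valued in `ℂ`. -/
noncomputable def cbinom (n : ℤ) (k : ℕ) : ℂ :=
  (∏ i ∈ Finset.range k, ((n : ℂ) - (i : ℂ))) / (Nat.factorial k : ℂ)

/-- A vertex operator algebra structure on a complex vector space `V`. -/
structure VOA (V : Type) [AddCommGroup V] [Module ℂ V] where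
  mode : V → ℤ → Module.End ℂ V
  vacuum : V
  conformal : V
  grading : ℤ → Submodule ℂ V
  internal : Function.Bijective (DirectSum.coeLinearMap grading)
  mode_add : ∀ (u v : V) (n : ℤ), mode (u + v) n = mode u n + mode v n
  mode_smul : ∀ (c : ℂ) (u : V) (n : ℤ), mode (c • u) n = c • mode u n
  truncation : ∀ u v : V, ∃ N : ℤ, ∀ n : ℤ, N ≤ n → mode u n v = 0
  vacuum_mem : vacuum ∈ grading 0
  conformal_mem : conformal ∈ grading 2
  vacuum_mode : ∀ (v : V) (n : ℤ), mode vacuum n v = if n = -1 then v else 0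
  creation : ∀ (u : V) (n : ℤ), 0 ≤ n → mode u n vacuum = 0
  creation_neg_one : ∀ u : V, mode u (-1) vacuum = u
  L0_eigen : ∀ (n : ℤ) (u : V), u ∈ grading n → mode conformal 1 u = (n : ℂ) • u
  Lneg1_deriv : ∀ (u : V) (n : ℤ), mode (mode conformal 0 u) n = (-n : ℂ) • mode u (n - 1)
  grading_mode : ∀ (r s m : ℤ) (u v : V), u ∈ grading r → v ∈ grading s →
    mode u m v ∈ grading (r + s - m - 1)
  bounded_below : ∃ N : ℤ, ∀ n : ℤ, n < N → grading n = ⊥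
  fin_dim : ∀ n : ℤ, FiniteDimensional ℂ (grading n)
  borcherds : ∀ (p q r : ℤ) (u v w : V),
    (∑ᶠ i : ℕ, cbinom p i • mode (mode u (r + i) v) (p + q - i) w) =
    ∑ᶠ i : ℕ, ((-1 : ℂ) ^ i * cbinom r i) •
      (mode u (p + r - i) (mode v (q + i) w)
        - (-1 : ℂ) ^ r • mode v (q + r - i) (mode u (p + i) w))

variable {V : Type} [AddCommGroup V] [Module ℂ V]

/-- Projection onto the weight-`n` subspace. -/
noncomputable def VOA.proj (d : VOA V) (n : ℤ) : V →ₗ[ℂ] V :=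
  (d.grading n).subtype ∘ₗ (DirectSum.component ℂ ℤ (fun m => d.grading m) n) ∘ₗ
    (LinearEquiv.ofBijective (DirectSum.coeLinearMap d.grading) d.internal).symm.toLinearMap

/-- `Res_z (1+z)^N z^{-k} Y(u,z)v` for a vector `u` regarded as having weight contribution `N`. -/
noncomputable def VOA.hres (d : VOA V) (N k : ℤ) (u v : V) : V :=
  ∑ᶠ i : ℕ, cbinom N i • d.mode u ((i : ℤ) - k) v

/-- `Res_z (1+z)^{wt u + m} z^{-k} Y(u,z)v`, extended bilinearly from homogeneous `u`. -/
noncomputable def VOA.bres (d : VOA V) (m k : ℤ) (u v : V) : V :=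
  ∑ᶠ n : ℤ, d.hres (n + m) k (d.proj n u) v

/-- The Zhu product `u * v`. -/
noncomputable def VOA.star (d : VOA V) (u v : V) : V := d.bres 0 1 u v

/-- The Zhu circle product `u ∘ v`. -/
noncomputable def VOA.circ (d : VOA V) (u v : V) : V := d.bres 0 2 u v

/-- The subspace `O(V)` spanned by all `u ∘ v`. -/
def VOA.Ozhu (d : VOA V) : Submodule ℂ V := Submodule.span ℂ {w : V | ∃ u v : V, w = d.circ u v}

/-- The product `u ∘_n v`. -/
noncomputable def VOA.circn (d : VOA V) (n : ℕ) (u v : V) : V := d.bres n (2 * n + 2) u v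

/-- The product `u *_n v` of Dong–Li–Mason. -/
noncomputable def VOA.starn (d : VOA V) (n : ℕ) (u v : V) : V :=
  ∑ m ∈ Finset.range (n + 1),
    ((-1 : ℂ) ^ m * cbinom ((m : ℤ) + (n : ℤ)) n) • d.bres n ((n : ℤ) + (m : ℤ) + 1) u v

/-- The subspace `O_n(V)`. -/
def VOA.On (d : VOA V) (n : ℕ) : Submodule ℂ V :=
  Submodule.span ℂ ({w : V | ∃ u v : V, w = d.circn n u v} ∪
    {w : V | ∃ u : V, w = d.mode d.conformal 0 u + d.mode d.conformal 1 u})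

/-- The Dong–Jiang product `u *_{m,p}^n v`. -/
noncomputable def VOA.starmpn (d : VOA V) (m p n : ℕ) (u v : V) : V :=
  ∑ i ∈ Finset.range (p + 1),
    ((-1 : ℂ) ^ i * cbinom ((m : ℤ) + (n : ℤ) - (p : ℤ) + (i : ℤ)) i) •
      d.bres m ((m : ℤ) + (n : ℤ) - (p : ℤ) + (i : ℤ) + 1) u v

/-- The Dong–Jiang product `u ∘_m^n v`. -/
noncomputable def VOA.circmn (d : VOA V) (n m : ℕ) (u v : V) : V :=
  d.bres m ((n : ℤ) + (m : ℤ) + 2) u v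

/-- The subspace `O_{n,m}(V) = O'_{n,m}(V) + O''_{n,m}(V) + O'''_{n,m}(V)` of Dong–Jiang. -/
def VOA.Onm (d : VOA V) (n m : ℕ) : Submodule ℂ V :=
  Submodule.span ℂ (
    {w : V | ∃ u v : V, w = d.circmn n m u v} ∪
    {w : V | ∃ u : V, w = d.mode d.conformal 0 u + d.mode d.conformal 1 u
        + (((m : ℂ) - (n : ℂ)) • u)} ∪
    {w : V | ∃ (u a b c : V) (p₁ p₂ p₃ : ℕ), w = d.starmpn m p₃ n u
        (d.starmpn m p₁ p₃ (d.starmpn p₁ p₂ p₃ a b) c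
          - d.starmpn m p₂ p₃ a (d.starmpn m p₁ p₂ b c))} ∪
    {w : V | ∃ (p : ℕ) (u x v : V), x ∈ d.On p ∧ w = d.starmpn m p n (d.starmpn p p n u x) v})

/-- The subspace `C_2(V)` spanned by the `u_{-2} v`. -/
def VOA.C2 (d : VOA V) : Submodule ℂ V := Submodule.span ℂ {w : V | ∃ u v : V, w = d.mode u (-2) v}

/-- `V` is a simple vertex operator algebra: its only ideals are `0` and `V`. -/
def VOA.IsSimpleVOA (d : VOA V) : Prop :=
  (∃ v : V, v ≠ 0) ∧ ∀ P : Submodule ℂ V,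
    (∀ (u : V) (n : ℤ), ∀ w ∈ P, d.mode u n w ∈ P) → P = ⊥ ∨ P = ⊤

/-- A weak module for the vertex operator algebra `d`. -/
structure WeakMod (d : VOA V) (M : Type) [AddCommGroup M] [Module ℂ M] where
  act : V → ℤ → Module.End ℂ M
  act_add : ∀ (u v : V) (n : ℤ), act (u + v) n = act u n + act v n
  act_smul : ∀ (c : ℂ) (u : V) (n : ℤ), act (c • u) n = c • act u n
  truncation : ∀ (u : V) (w : M), ∃ N : ℤ, ∀ n : ℤ, N ≤ n → act u n w = 0
  vacuum_act : ∀ (w : M) (n : ℤ), act d.vacuum n w = if n = -1 then w else 0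
  borcherds : ∀ (p q r : ℤ) (u v : V) (w : M),
    (∑ᶠ i : ℕ, cbinom p i • act (d.mode u (r + i) v) (p + q - i) w) =
    ∑ᶠ i : ℕ, ((-1 : ℂ) ^ i * cbinom r i) •
      (act u (p + r - i) (act v (q + i) w)
        - (-1 : ℂ) ^ r • act v (q + r - i) (act u (p + i) w))

/-- An admissible (ℤ₊-graded) module for the vertex operator algebra `d`. -/
structure AdmMod (d : VOA V) (M : Type) [AddCommGroup M] [Module ℂ M]
    extends WeakMod d M where
  gr : ℤ → Submodule ℂ M
  gr_internal : Function.Bijective (DirectSum.coeLinearMap gr)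
  gr_neg : ∀ n : ℤ, n < 0 → gr n = ⊥
  gr_act : ∀ (r : ℤ) (u : V), u ∈ d.grading r → ∀ (m n : ℤ) (w : M), w ∈ gr n →
    act u m w ∈ gr (r + n - m - 1)

variable {M : Type} [AddCommGroup M] [Module ℂ M]

/-- The zero-mode `o(v) = v_{wt v - 1}`, extended linearly from homogeneous `v`. -/
noncomputable def WeakMod.o {d : VOA V} (W : WeakMod d M) (v : V) (w : M) : M :=
  ∑ᶠ r : ℤ, W.act (d.proj r v) (r - 1) w

/-- The mode `o_t(v) = v_{wt v - 1 - t}`, extended linearly from homogeneous `v`. -/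
noncomputable def WeakMod.ot {d : VOA V} (W : WeakMod d M) (t : ℤ) (v : V) (w : M) : M :=
  ∑ᶠ r : ℤ, W.act (d.proj r v) (r - 1 - t) w

/-- The subspace `Ω_n(M)` of a weak module. -/
def WeakMod.OmegaSet {d : VOA V} (W : WeakMod d M) (n : ℕ) : Set M :=
  {w : M | ∀ (r : ℤ) (u : V), u ∈ d.grading r → ∀ m : ℤ, m > r - 1 + (n : ℤ) → W.act u m w = 0}

/-- A subspace stable under all modes. -/
def WeakMod.IsStable {d : VOA V} (W : WeakMod d M) (P : Submodule ℂ M) : Prop :=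
  ∀ (u : V) (n : ℤ), ∀ w ∈ P, W.act u n w ∈ P

/-- A subspace compatible with the grading of an admissible module. -/
def AdmMod.IsGraded {d : VOA V} (A : AdmMod d M) (P : Submodule ℂ M) : Prop :=
  P = ⨆ n : ℤ, (P ⊓ A.gr n)

/-- `P` is an irreducible admissible submodule. -/
def AdmMod.IrredSub {d : VOA V} (A : AdmMod d M) (P : Submodule ℂ M) : Prop :=
  P ≠ ⊥ ∧ A.toWeakMod.IsStable P ∧ A.IsGraded P ∧
    ∀ Q : Submodule ℂ M, Q ≤ P → A.toWeakMod.IsStable Q → A.IsGraded Q → Q = ⊥ ∨ Q = P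

/-- The admissible module is irreducible. -/
def AdmMod.IsIrreducible {d : VOA V} (A : AdmMod d M) : Prop :=
  (∃ w : M, w ≠ 0) ∧
    ∀ P : Submodule ℂ M, A.toWeakMod.IsStable P → A.IsGraded P → P = ⊥ ∨ P = ⊤

/-- Rationality: every admissible module is a direct sum of irreducible admissible submodules. -/
def Rational (d : VOA V) : Prop :=
  ∀ (M : Type) [AddCommGroup M] [Module ℂ M] (A : AdmMod d M),
    ∃ (ι : Type) (f : ι → Submodule ℂ M),
      (∀ i, A.IrredSub (f i)) ∧ iSupIndep f ∧ (⨆ i, f i) = ⊤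

/-- Equivalence of admissible modules. -/
def AdmEquiv {d : VOA V} {M₁ M₂ : Type} [AddCommGroup M₁] [Module ℂ M₁]
    [AddCommGroup M₂] [Module ℂ M₂] (A₁ : AdmMod d M₁) (A₂ : AdmMod d M₂) : Prop :=
  ∃ e : M₁ ≃ₗ[ℂ] M₂, ∀ (u : V) (n : ℤ) (w : M₁), e (A₁.act u n w) = A₂.act u n (e w)

/-- An ordinary-module structure on a weak module: a `ℂ`-grading by finite dimensional
`L(0)`-eigenspaces, bounded below in each coset of `ℤ`. -/
structure OrdinaryStruct {d : VOA V} (W : WeakMod d M) where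
  grc : ℂ → Submodule ℂ M
  internal : Function.Bijective (DirectSum.coeLinearMap grc)
  eigen : ∀ (lam : ℂ) (w : M), w ∈ grc lam → W.act d.conformal 1 w = lam • w
  findim : ∀ lam : ℂ, FiniteDimensional ℂ (grc lam)
  bounded : ∀ lam : ℂ, ∃ N : ℤ, ∀ n : ℤ, n < N → grc (lam + (n : ℂ)) = ⊥

/-- An admissible module is ordinary. -/
def AdmMod.IsOrdinary {d : VOA V} (A : AdmMod d M) : Prop :=
  Nonempty (OrdinaryStruct A.toWeakMod)

/-- A realization of the quotient associative algebra `V/Osub` with product induced by `mu`. -/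
structure Realization (Osub : Submodule ℂ V) (mu : V → V → V) (one : V) where
  carrier : Type
  [ring : Ring carrier]
  [alg : Algebra ℂ carrier]
  emb : V →ₗ[ℂ] carrier
  surj : Function.Surjective emb
  ker_eq : LinearMap.ker emb = Osub
  mul_compat : ∀ u v : V, emb (mu u v) = emb u * emb v
  one_compat : emb one = 1

/-- The realized algebra is semisimple. -/
def Realization.Semisimple {Osub : Submodule ℂ V} {mu : V → V → V} {one : V}
    (R : Realization Osub mu one) : Prop :=
  letI := R.ring; IsSemisimpleRing R.carrier

/-- The realized algebra is finite dimensional over `ℂ`. -/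
def Realization.FinDim {Osub : Submodule ℂ V} {mu : V → V → V} {one : V}
    (R : Realization Osub mu one) : Prop :=
  letI := R.ring; letI := R.alg; FiniteDimensional ℂ R.carrier

/-- A module over the quotient algebra `V/Osub`, given as a representation of `V`
killing `Osub` and multiplicative for `mu`. -/
structure RepOf (Osub : Submodule ℂ V) (mu : V → V → V) (one : V)
    (U : Type) [AddCommGroup U] [Module ℂ U] where
  rep : V →ₗ[ℂ] Module.End ℂ U
  kills : ∀ v ∈ Osub, rep v = 0
  mul_compat : ∀ u v : V, rep (mu u v) = rep u * rep v
  one_compat : rep one = 1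

/-- Simplicity of such a representation. -/
def RepOf.IsSimple {Osub : Submodule ℂ V} {mu : V → V → V} {one : V}
    {U : Type} [AddCommGroup U] [Module ℂ U] (Z : RepOf Osub mu one U) : Prop :=
  (∃ u : U, u ≠ 0) ∧
    ∀ P : Submodule ℂ U, (∀ v : V, ∀ x ∈ P, Z.rep v x ∈ P) → P = ⊥ ∨ P = ⊤

/-- Equivalence of two such representations. -/
def RepEquiv {Osub : Submodule ℂ V} {mu : V → V → V} {one : V}
    {U₁ U₂ : Type} [AddCommGroup U₁] [Module ℂ U₁] [AddCommGroup U₂] [Module ℂ U₂]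
    (Z₁ : RepOf Osub mu one U₁) (Z₂ : RepOf Osub mu one U₂) : Prop :=
  ∃ e : U₁ ≃ₗ[ℂ] U₂, ∀ (v : V) (x : U₁), e (Z₁.rep v x) = Z₂.rep v (e x)

/-! ### Auxiliary lemmas -/

section AuxLemmas

lemma finsum_eq_sum_of_vanish {α ι : Type*} [AddCommMonoid α] {f : ι → α} (S : Finset ι)
    (h : ∀ i, i ∉ S → f i = 0) : ∑ᶠ i, f i = ∑ i ∈ S, f i :=
  finsum_eq_finset_sum_of_support_subset f fun i hi => by
    by_contra hc; exact hi (h i hc)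

lemma cbinom_zero_right (n : ℤ) : cbinom n 0 = 1 := by simp [cbinom]

lemma cbinom_zero_left {i : ℕ} (h : i ≠ 0) : cbinom 0 i = 0 := by
  unfold cbinom
  rw [Finset.prod_eq_zero (Finset.mem_range.2 (Nat.pos_of_ne_zero h)) (by norm_num), zero_div]

lemma factorial_cast_ne_zero (i : ℕ) : ((Nat.factorial i : ℂ)) ≠ 0 :=
  Nat.cast_ne_zero.2 (Nat.factorial_ne_zero i)

lemma cbinom_neg_one (i : ℕ) : cbinom (-1) i = (-1 : ℂ) ^ i := by
  have key : (∏ j ∈ Finset.range i, (((-1 : ℤ) : ℂ) - (j : ℂ)))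
      = (-1 : ℂ) ^ i * (Nat.factorial i : ℂ) := by
    induction i with
    | zero => simp
    | succ k ih =>
        rw [Finset.prod_range_succ, ih, Nat.factorial_succ]
        push_cast; ring
  unfold cbinom
  rw [key, mul_div_assoc, div_self (factorial_cast_ne_zero i), mul_one]

lemma cbinom_neg_two (i : ℕ) : cbinom (-2) i = (-1 : ℂ) ^ i * ((i : ℂ) + 1) := by
  have key : (∏ j ∈ Finset.range i, (((-2 : ℤ) : ℂ) - (j : ℂ)))
      = (-1 : ℂ) ^ i * (Nat.factorial (i + 1) : ℂ) := by
    induction i with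
    | zero => simp
    | succ k ih =>
        rw [Finset.prod_range_succ, ih, Nat.factorial_succ (k+1)]
        push_cast; ring
  unfold cbinom
  rw [key, Nat.factorial_succ]
  push_cast
  rw [div_eq_iff (factorial_cast_ne_zero i)]
  ring

lemma neg_one_pow_sq (i : ℕ) : (-1 : ℂ) ^ i * (-1 : ℂ) ^ i = 1 := by
  rw [← pow_add, ← two_mul, pow_mul]
  norm_num

end AuxLemmas

namespace VOA

lemma mode_zero (d : VOA V) (n : ℤ) : d.mode 0 n = 0 := by
  have h := d.mode_smul 0 0 n
  rwa [smul_zero, zero_smul] at h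

lemma proj_apply (d : VOA V) (n : ℤ) (v : V) :
    d.proj n v = (((LinearEquiv.ofBijective (DirectSum.coeLinearMap d.grading)
      d.internal).symm v) n : V) := rfl

lemma proj_mem (d : VOA V) (n : ℤ) (v : V) : d.proj n v ∈ d.grading n := by
  rw [d.proj_apply]; exact Submodule.coe_mem _

lemma proj_eq_same (d : VOA V) {t : ℤ} {v : V} (h : v ∈ d.grading t) : d.proj t v = v := by
  rw [d.proj_apply, DirectSum.IsInternal.ofBijective_coeLinearMap_of_mem d.internal h]

lemma proj_eq_ne (d : VOA V) {t : ℤ} {v : V} (h : v ∈ d.grading t) {n : ℤ} (hn : t ≠ n) :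
    d.proj n v = 0 := by
  rw [d.proj_apply, DirectSum.IsInternal.ofBijective_coeLinearMap_of_mem_ne d.internal hn h]
  rfl

lemma proj_support_finite (d : VOA V) (v : V) :
    (Function.support fun n => d.proj n v).Finite := by
  apply Set.Finite.subset (DFinsupp.finite_support
    ((LinearEquiv.ofBijective (DirectSum.coeLinearMap d.grading) d.internal).symm v))
  intro n hn
  simp only [Function.mem_support] at hn
  simp only [Set.mem_setOf_eq]
  intro h0
  exact hn (by rw [d.proj_apply, h0]; rfl)

/-- Canonical finite support of the homogeneous decomposition. -/
noncomputable def psupp (d : VOA V) (v : V) : Finset ℤ := (d.proj_support_finite v).toFinset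

lemma psupp_spec (d : VOA V) {v : V} {n : ℤ} (h : n ∉ d.psupp v) : d.proj n v = 0 := by
  unfold psupp at h
  rw [Set.Finite.mem_toFinset, Function.mem_support, not_not] at h
  exact h

lemma sum_proj (d : VOA V) {v : V} (S : Finset ℤ) (h : ∀ n, n ∉ S → d.proj n v = 0) :
    ∑ n ∈ S, d.proj n v = v := by
  classical
  set e := LinearEquiv.ofBijective (DirectSum.coeLinearMap d.grading) d.internal with he
  set x := e.symm v with hx
  have h1 : DirectSum.coeLinearMap d.grading x = v := by
    have h0 := e.apply_symm_apply v
    rwa [he, LinearEquiv.ofBijective_apply] at h0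
  have h2 : ∑ i ∈ x.support, d.proj i v = v := by
    have h3 := DirectSum.sum_support_of x
    calc ∑ i ∈ x.support, d.proj i v
        = ∑ i ∈ x.support,
            (DirectSum.coeLinearMap d.grading) (DirectSum.of (fun i => d.grading i) i (x i)) :=
          Finset.sum_congr rfl (fun i _ => by
            rw [d.proj_apply, DirectSum.coeLinearMap_of])
      _ = (DirectSum.coeLinearMap d.grading)
            (∑ i ∈ x.support, DirectSum.of (fun i => d.grading i) i (x i)) :=
          (map_sum _ _ _).symm
      _ = v := by rw [h3, h1]
  have hsub1 : ∑ n ∈ S, d.proj n v = ∑ n ∈ S ∪ x.support, d.proj n v :=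
    Finset.sum_subset Finset.subset_union_left (fun n _ hn => h n hn)
  have hsub2 : ∑ n ∈ x.support, d.proj n v = ∑ n ∈ S ∪ x.support, d.proj n v :=
    Finset.sum_subset Finset.subset_union_right (fun n _ hn => by
      rw [DFinsupp.notMem_support_iff] at hn
      rw [d.proj_apply]
      show ((x n : V)) = 0
      rw [hn]; rfl)
  rw [hsub1, ← hsub2, h2]

lemma hres_zero_left (d : VOA V) (N k : ℤ) (v : V) : d.hres N k 0 v = 0 := by
  unfold hres
  rw [finsum_eq_zero_of_forall_eq_zero]
  intro i
  rw [d.mode_zero, LinearMap.zero_apply, smul_zero]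

lemma hres_add_right (d : VOA V) (N k : ℤ) (u v₁ v₂ : V) :
    d.hres N k u (v₁ + v₂) = d.hres N k u v₁ + d.hres N k u v₂ := by
  unfold hres
  have hfin : ∀ v : V,
      (Function.support fun i : ℕ => cbinom N i • d.mode u ((i : ℤ) - k) v).Finite := by
    intro v
    obtain ⟨Nv, hNv⟩ := d.truncation u v
    apply Set.Finite.subset (Set.finite_Iio ((Nv + k).toNat + 1))
    intro i hi
    rw [Function.mem_support] at hi
    by_contra hc
    simp only [Set.mem_Iio, not_lt] at hc
    apply hi
    rw [hNv _ (by
      have := Int.self_le_toNat (Nv + k)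
      omega), smul_zero]
  rw [← finsum_add_distrib (hfin v₁) (hfin v₂)]
  exact finsum_congr fun i => by rw [map_add, smul_add]

lemma hres_sum_right {β : Type} (d : VOA V) (N k : ℤ) (u : V) (S : Finset β) (f : β → V) :
    d.hres N k u (∑ b ∈ S, f b) = ∑ b ∈ S, d.hres N k u (f b) := by
  classical
  induction S using Finset.induction_on with
  | empty =>
      simp only [Finset.sum_empty]
      unfold hres
      rw [finsum_eq_zero_of_forall_eq_zero]
      intro i
      rw [map_zero, smul_zero]
  | insert _ _ hb ih =>
      rw [Finset.sum_insert hb, Finset.sum_insert hb, d.hres_add_right, ih]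

lemma bres_homog (d : VOA V) {r : ℤ} {u : V} (hu : u ∈ d.grading r) (m k : ℤ) (v : V) :
    d.bres m k u v = d.hres (r + m) k u v := by
  unfold bres
  rw [finsum_eq_single _ r]
  · rw [d.proj_eq_same hu]
  · intro n hn
    rw [d.proj_eq_ne hu (Ne.symm hn), d.hres_zero_left]

lemma bres_decomp (d : VOA V) (m k : ℤ) (u v : V) :
    d.bres m k u v = ∑ n ∈ d.psupp u, ∑ s ∈ d.psupp v, d.bres m k (d.proj n u) (d.proj s v) := by
  have h1 : d.bres m k u v = ∑ n ∈ d.psupp u, d.hres (n + m) k (d.proj n u) v := by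
    unfold bres
    apply finsum_eq_sum_of_vanish
    intro n hn
    rw [d.psupp_spec hn, d.hres_zero_left]
  rw [h1]
  apply Finset.sum_congr rfl
  intro n _
  conv_lhs => rw [← d.sum_proj (d.psupp v) (fun t ht => d.psupp_spec ht)]
  rw [d.hres_sum_right]
  exact Finset.sum_congr rfl fun s _ => (d.bres_homog (d.proj_mem n u) m k _).symm

end VOA
namespace WeakMod

variable {d : VOA V} {M : Type} [AddCommGroup M] [Module ℂ M]

lemma act_zero (W : WeakMod d M) (n : ℤ) : W.act 0 n = 0 := by
  have h := W.act_smul 0 0 n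
  rwa [smul_zero, zero_smul] at h

lemma o_eq_sum (W : WeakMod d M) {v : V} (S : Finset ℤ) (h : ∀ n, n ∉ S → d.proj n v = 0)
    (w : M) : W.o v w = ∑ n ∈ S, W.act (d.proj n v) (n - 1) w := by
  apply finsum_eq_sum_of_vanish
  intro n hn
  rw [h n hn, W.act_zero, LinearMap.zero_apply]

lemma o_eq_psupp (W : WeakMod d M) (v : V) (w : M) :
    W.o v w = ∑ n ∈ d.psupp v, W.act (d.proj n v) (n - 1) w :=
  W.o_eq_sum (d.psupp v) (fun _ hn => d.psupp_spec hn) w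

lemma o_homog (W : WeakMod d M) {t : ℤ} {v : V} (h : v ∈ d.grading t) (w : M) :
    W.o v w = W.act v (t - 1) w := by
  unfold o
  rw [finsum_eq_single _ t]
  · rw [d.proj_eq_same h]
  · intro n hn
    rw [d.proj_eq_ne h (Ne.symm hn), W.act_zero, LinearMap.zero_apply]

lemma o_add_left (W : WeakMod d M) (x y : V) (w : M) :
    W.o (x + y) w = W.o x w + W.o y w := by
  set S := d.psupp x ∪ d.psupp y with hS
  have hx : ∀ n, n ∉ S → d.proj n x = 0 := fun n hn =>
    d.psupp_spec (fun hc => hn (Finset.mem_union_left _ hc))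
  have hy : ∀ n, n ∉ S → d.proj n y = 0 := fun n hn =>
    d.psupp_spec (fun hc => hn (Finset.mem_union_right _ hc))
  have hxy : ∀ n, n ∉ S → d.proj n (x + y) = 0 := fun n hn => by
    rw [map_add, hx n hn, hy n hn, add_zero]
  rw [W.o_eq_sum S hxy, W.o_eq_sum S hx, W.o_eq_sum S hy, ← Finset.sum_add_distrib]
  apply Finset.sum_congr rfl
  intro n _
  rw [map_add, W.act_add, LinearMap.add_apply]

lemma o_smul_left (W : WeakMod d M) (c : ℂ) (x : V) (w : M) :
    W.o (c • x) w = c • W.o x w := by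
  have hx : ∀ n, n ∉ d.psupp x → d.proj n x = 0 := fun n hn => d.psupp_spec hn
  have hcx : ∀ n, n ∉ d.psupp x → d.proj n (c • x) = 0 := fun n hn => by
    rw [map_smul, hx n hn, smul_zero]
  rw [W.o_eq_sum _ hcx, W.o_eq_sum _ hx, Finset.smul_sum]
  apply Finset.sum_congr rfl
  intro n _
  rw [map_smul, W.act_smul, LinearMap.smul_apply]

lemma o_zero_left (W : WeakMod d M) (w : M) : W.o 0 w = 0 := by
  have := W.o_smul_left 0 0 w
  rwa [zero_smul, zero_smul] at this

/-- `o` as a linear map in its `V`-argument. -/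
noncomputable def oLM (W : WeakMod d M) (w : M) : V →ₗ[ℂ] M where
  toFun v := W.o v w
  map_add' x y := W.o_add_left x y w
  map_smul' c x := W.o_smul_left c x w

lemma oLM_apply (W : WeakMod d M) (w : M) (v : V) : W.oLM w v = W.o v w := rfl

lemma o_add_right (W : WeakMod d M) (v : V) (w₁ w₂ : M) :
    W.o v (w₁ + w₂) = W.o v w₁ + W.o v w₂ := by
  rw [W.o_eq_psupp, W.o_eq_psupp v w₁, W.o_eq_psupp v w₂, ← Finset.sum_add_distrib]
  exact Finset.sum_congr rfl fun n _ => map_add _ _ _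

lemma o_smul_right (W : WeakMod d M) (v : V) (c : ℂ) (w : M) :
    W.o v (c • w) = c • W.o v w := by
  rw [W.o_eq_psupp, W.o_eq_psupp v w, Finset.smul_sum]
  exact Finset.sum_congr rfl fun n _ => map_smul _ _ _

/-- The `L(-1)`-derivative property for weak modules. -/
lemma act_deriv (W : WeakMod d M) (u : V) (n : ℤ) (w : M) :
    W.act (d.mode d.conformal 0 u) n w = (-n : ℂ) • W.act u (n - 1) w := by
  -- Step 1 : `L(-1) u = u_{-2} 𝟙` in `V`.
  have h1 : d.mode d.conformal 0 u = d.mode u (-2) d.vacuum := by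
    have h := congrArg (fun f : Module.End ℂ V => f d.vacuum) (d.Lneg1_deriv u (-1))
    simp only [LinearMap.smul_apply] at h
    rw [d.creation_neg_one] at h
    norm_num at h
    exact h
  -- Step 2 : Borcherds with `p = 0`, `q = n`, `r = -2`, `v = 𝟙`.
  have hb := W.borcherds 0 n (-2) u d.vacuum w
  have hL : (∑ᶠ i : ℕ, cbinom 0 i • W.act (d.mode u (-2 + (i:ℤ)) d.vacuum) (0 + n - (i:ℤ)) w)
      = W.act (d.mode d.conformal 0 u) n w := by
    rw [finsum_eq_single _ 0]
    · rw [h1]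
      norm_num [cbinom_zero_right]
    · intro i hi
      rw [cbinom_zero_left hi, zero_smul]
  rw [hL] at hb
  rw [hb]
  -- Step 3 : evaluate the right-hand side.
  have hz2 : ((-1:ℂ) ^ (-2:ℤ)) = 1 := by norm_num
  rcases lt_trichotomy n 0 with hn | hn | hn
  · -- n < 0 : only `i = -1 - n` contributes
    set i₀ : ℕ := (-1 - n).toNat with hi₀def
    have hi₀ : (i₀ : ℤ) = -1 - n := Int.toNat_of_nonneg (by omega)
    rw [finsum_eq_single _ i₀]
    · rw [W.vacuum_act, W.vacuum_act, if_pos (by omega), if_neg (by omega),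
        smul_zero, sub_zero, cbinom_neg_two]
      rw [show (0 + (-2:ℤ) - (i₀:ℤ)) = n - 1 by omega]
      rw [← mul_assoc, neg_one_pow_sq, one_mul]
      congr 1
      have : ((i₀ : ℂ)) = ((i₀ : ℤ) : ℂ) := by push_cast; ring
      rw [this, hi₀]
      push_cast; ring
    · intro i hi
      have hne : (i : ℤ) ≠ -1 - n := by
        intro hc; apply hi
        have : (i : ℤ) = (i₀ : ℤ) := by rw [hi₀, hc]
        exact_mod_cast this
      rw [W.vacuum_act, W.vacuum_act, if_neg (by omega), if_neg (by omega), map_zero,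
        smul_zero, sub_zero, smul_zero]
  · -- n = 0 : nothing contributes
    subst hn
    refine Eq.trans (finsum_eq_zero_of_forall_eq_zero ?_) (by simp)
    intro i
    rw [W.vacuum_act, W.vacuum_act, if_neg (by omega), if_neg (by omega), map_zero,
      smul_zero, sub_zero, smul_zero]
  · -- n > 0 : only `i = n - 1` contributes
    set i₀ : ℕ := (n - 1).toNat with hi₀def
    have hi₀ : (i₀ : ℤ) = n - 1 := Int.toNat_of_nonneg (by omega)
    rw [finsum_eq_single _ i₀]
    · rw [W.vacuum_act, W.vacuum_act, if_neg (by omega), if_pos (by omega), map_zero,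
        zero_sub, hz2, one_smul, cbinom_neg_two]
      rw [show ((0:ℤ) + (i₀:ℤ)) = n - 1 by omega]
      rw [smul_neg, ← mul_assoc, neg_one_pow_sq, one_mul, ← neg_smul]
      congr 1
      have : ((i₀ : ℂ)) = ((i₀ : ℤ) : ℂ) := by push_cast; ring
      rw [this, hi₀]
      push_cast; ring
    · intro i hi
      have hne : (i : ℤ) ≠ n - 1 := by
        intro hc; apply hi
        have : (i : ℤ) = (i₀ : ℤ) := by rw [hi₀, hc]
        exact_mod_cast this
      rw [W.vacuum_act, W.vacuum_act, if_neg (by omega), if_neg (by omega), map_zero,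
        smul_zero, sub_zero, smul_zero]

end WeakMod
namespace AdmMod

variable {d : VOA V} {M : Type} [AddCommGroup M] [Module ℂ M]

lemma act_vanish (A : AdmMod d M) {r : ℤ} {u : V} (hu : u ∈ d.grading r) {w : M}
    (hw : w ∈ A.gr 0) {m : ℤ} (hm : r ≤ m) : A.act u m w = 0 := by
  have h := A.gr_act r u hu m 0 w hw
  rw [A.gr_neg (r + 0 - m - 1) (by omega)] at h
  simpa using h

lemma o_mem (A : AdmMod d M) (v : V) {w : M} (hw : w ∈ A.gr 0) :
    A.toWeakMod.o v w ∈ A.gr 0 := by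
  rw [A.toWeakMod.o_eq_psupp]
  apply Submodule.sum_mem
  intro n _
  have h := A.gr_act n (d.proj n v) (d.proj_mem n v) (n - 1) 0 w hw
  rwa [show n + 0 - (n - 1) - 1 = 0 by ring] at h

lemma o_star_homog (A : AdmMod d M) {r s : ℤ} {u v : V} (hu : u ∈ d.grading r)
    (hv : v ∈ d.grading s) {w : M} (hw : w ∈ A.gr 0) :
    A.toWeakMod.o (d.star u v) w = A.act u (r - 1) (A.act v (s - 1) w) := by
  obtain ⟨N, hN⟩ := d.truncation u v
  set T : ℕ := N.toNat + 3 with hT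
  have hNT : ∀ i : ℕ, T ≤ i → ∀ k : ℤ, k ≤ 2 → d.mode u ((i : ℤ) - k) v = 0 := by
    intro i hi k hk
    apply hN
    have h1 := Int.self_le_toNat N
    omega
  have hgr : ∀ i : ℕ, d.mode u ((i : ℤ) - 1) v ∈ d.grading (r + s - i) := by
    intro i
    have h := d.grading_mode r s ((i : ℤ) - 1) u v hu hv
    rwa [show r + s - ((i : ℤ) - 1) - 1 = r + s - i by ring] at h
  have hstar : d.star u v = ∑ i ∈ Finset.range T, cbinom r i • d.mode u ((i : ℤ) - 1) v := by
    have h0 : d.star u v = d.hres (r + 0) 1 u v := d.bres_homog hu 0 1 v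
    rw [h0, show (r + 0 : ℤ) = r from add_zero r]
    unfold VOA.hres
    apply finsum_eq_sum_of_vanish
    intro i hi
    rw [hNT i (by simpa [Finset.mem_range, not_lt] using hi) 1 (by norm_num), smul_zero]
  have hLHS : A.toWeakMod.o (d.star u v) w
      = ∑ i ∈ Finset.range T, cbinom r i • A.act (d.mode u ((i : ℤ) - 1) v) (r + s - i - 1) w := by
    rw [hstar, ← A.toWeakMod.oLM_apply, map_sum]
    apply Finset.sum_congr rfl
    intro i _
    rw [map_smul, A.toWeakMod.oLM_apply, A.toWeakMod.o_homog (hgr i)]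
  have hb := A.toWeakMod.borcherds r (s - 1) (-1) u v w
  have hL2 : (∑ᶠ i : ℕ, cbinom r i • A.act (d.mode u (-1 + (i : ℤ)) v) (r + (s - 1) - (i : ℤ)) w)
      = ∑ i ∈ Finset.range T, cbinom r i • A.act (d.mode u ((i : ℤ) - 1) v) (r + s - i - 1) w := by
    rw [finsum_eq_sum_of_vanish (Finset.range T) ?_]
    · apply Finset.sum_congr rfl
      intro i _
      rw [show (-1 + (i : ℤ)) = (i : ℤ) - 1 by ring,
        show r + (s - 1) - (i : ℤ) = r + s - (i : ℤ) - 1 by ring]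
    · intro i hi
      rw [show (-1 + (i : ℤ)) = (i : ℤ) - 1 by ring,
        hNT i (by simpa [Finset.mem_range, not_lt] using hi) 1 (by norm_num),
        A.toWeakMod.act_zero, LinearMap.zero_apply, smul_zero]
  have hR2 : (∑ᶠ i : ℕ, ((-1 : ℂ) ^ i * cbinom (-1) i) •
      (A.act u (r + -1 - (i : ℤ)) (A.act v ((s - 1) + (i : ℤ)) w)
        - (-1 : ℂ) ^ (-1 : ℤ) • A.act v ((s - 1) + -1 - (i : ℤ)) (A.act u (r + (i : ℤ)) w)))
      = A.act u (r - 1) (A.act v (s - 1) w) := by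
    rw [finsum_eq_single _ 0]
    · rw [A.act_vanish hu hw (by simp : r ≤ r + ((0 : ℕ) : ℤ)), map_zero, smul_zero, sub_zero,
        cbinom_zero_right, pow_zero, one_mul, one_smul]
      norm_num
      ring_nf
    · intro i hi
      have h1 : 1 ≤ (i : ℤ) := by exact_mod_cast Nat.one_le_iff_ne_zero.2 hi
      rw [A.act_vanish hv hw (by omega : s ≤ s - 1 + (i : ℤ)), map_zero,
        A.act_vanish hu hw (by omega : r ≤ r + (i : ℤ)), map_zero, smul_zero, sub_zero,
        smul_zero]
  rw [hLHS, ← hL2, hb, hR2]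

lemma o_circ_homog (A : AdmMod d M) {r s : ℤ} {u v : V} (hu : u ∈ d.grading r)
    (hv : v ∈ d.grading s) {w : M} (hw : w ∈ A.gr 0) :
    A.toWeakMod.o (d.circ u v) w = 0 := by
  obtain ⟨N, hN⟩ := d.truncation u v
  set T : ℕ := N.toNat + 3 with hT
  have hNT : ∀ i : ℕ, T ≤ i → ∀ k : ℤ, k ≤ 2 → d.mode u ((i : ℤ) - k) v = 0 := by
    intro i hi k hk
    apply hN
    have h1 := Int.self_le_toNat N
    omega
  have hgr : ∀ i : ℕ, d.mode u ((i : ℤ) - 2) v ∈ d.grading (r + s - i + 1) := by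
    intro i
    have h := d.grading_mode r s ((i : ℤ) - 2) u v hu hv
    rwa [show r + s - ((i : ℤ) - 2) - 1 = r + s - i + 1 by ring] at h
  have hcirc : d.circ u v = ∑ i ∈ Finset.range T, cbinom r i • d.mode u ((i : ℤ) - 2) v := by
    have h0 : d.circ u v = d.hres (r + 0) 2 u v := d.bres_homog hu 0 2 v
    rw [h0, show (r + 0 : ℤ) = r from add_zero r]
    unfold VOA.hres
    apply finsum_eq_sum_of_vanish
    intro i hi
    rw [hNT i (by simpa [Finset.mem_range, not_lt] using hi) 2 (by norm_num), smul_zero]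
  have hLHS : A.toWeakMod.o (d.circ u v) w
      = ∑ i ∈ Finset.range T, cbinom r i • A.act (d.mode u ((i : ℤ) - 2) v) (r + s - i) w := by
    rw [hcirc, ← A.toWeakMod.oLM_apply, map_sum]
    apply Finset.sum_congr rfl
    intro i _
    rw [map_smul, A.toWeakMod.oLM_apply, A.toWeakMod.o_homog (hgr i),
      show r + s - (i : ℤ) + 1 - 1 = r + s - (i : ℤ) by ring]
  have hb := A.toWeakMod.borcherds r s (-2) u v w
  have hL2 : (∑ᶠ i : ℕ, cbinom r i • A.act (d.mode u (-2 + (i : ℤ)) v) (r + s - (i : ℤ)) w)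
      = ∑ i ∈ Finset.range T, cbinom r i • A.act (d.mode u ((i : ℤ) - 2) v) (r + s - i) w := by
    rw [finsum_eq_sum_of_vanish (Finset.range T) ?_]
    · apply Finset.sum_congr rfl
      intro i _
      rw [show (-2 + (i : ℤ)) = (i : ℤ) - 2 by ring]
    · intro i hi
      rw [show (-2 + (i : ℤ)) = (i : ℤ) - 2 by ring,
        hNT i (by simpa [Finset.mem_range, not_lt] using hi) 2 (by norm_num),
        A.toWeakMod.act_zero, LinearMap.zero_apply, smul_zero]
  have hR2 : (∑ᶠ i : ℕ, ((-1 : ℂ) ^ i * cbinom (-2) i) •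
      (A.act u (r + -2 - (i : ℤ)) (A.act v (s + (i : ℤ)) w)
        - (-1 : ℂ) ^ (-2 : ℤ) • A.act v (s + -2 - (i : ℤ)) (A.act u (r + (i : ℤ)) w))) = 0 := by
    apply finsum_eq_zero_of_forall_eq_zero
    intro i
    have h0 : (0 : ℤ) ≤ (i : ℤ) := Int.ofNat_nonneg i
    rw [A.act_vanish hv hw (by omega : s ≤ s + (i : ℤ)), map_zero,
      A.act_vanish hu hw (by omega : r ≤ r + (i : ℤ)), map_zero, smul_zero, sub_zero, smul_zero]
  rw [hLHS, ← hL2, hb, hR2]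

lemma o_star (A : AdmMod d M) (u v : V) {w : M} (hw : w ∈ A.gr 0) :
    A.toWeakMod.o (d.star u v) w = A.toWeakMod.o u (A.toWeakMod.o v w) := by
  have h1 : d.star u v = ∑ n ∈ d.psupp u, ∑ s ∈ d.psupp v, d.star (d.proj n u) (d.proj s v) :=
    d.bres_decomp 0 1 u v
  rw [h1, ← A.toWeakMod.oLM_apply, map_sum]
  have h2 : ∀ n ∈ d.psupp u,
      (A.toWeakMod.oLM w) (∑ s ∈ d.psupp v, d.star (d.proj n u) (d.proj s v))
      = A.act (d.proj n u) (n - 1) (A.toWeakMod.o v w) := by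
    intro n _
    rw [map_sum, A.toWeakMod.o_eq_psupp v w, map_sum]
    apply Finset.sum_congr rfl
    intro s _
    rw [A.toWeakMod.oLM_apply]
    exact A.o_star_homog (d.proj_mem n u) (d.proj_mem s v) hw
  rw [Finset.sum_congr rfl h2]
  exact (A.toWeakMod.o_eq_sum (d.psupp u) (fun t ht => d.psupp_spec ht) _).symm

lemma o_circ (A : AdmMod d M) (u v : V) {w : M} (hw : w ∈ A.gr 0) :
    A.toWeakMod.o (d.circ u v) w = 0 := by
  have h1 : d.circ u v = ∑ n ∈ d.psupp u, ∑ s ∈ d.psupp v, d.circ (d.proj n u) (d.proj s v) :=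
    d.bres_decomp 0 2 u v
  rw [h1, ← A.toWeakMod.oLM_apply, map_sum]
  apply Finset.sum_eq_zero
  intro n _
  rw [map_sum]
  apply Finset.sum_eq_zero
  intro s _
  rw [A.toWeakMod.oLM_apply]
  exact A.o_circ_homog (d.proj_mem n u) (d.proj_mem s v) hw

lemma o_vacuum (A : AdmMod d M) (w : M) : A.toWeakMod.o d.vacuum w = w := by
  rw [A.toWeakMod.o_homog d.vacuum_mem, A.vacuum_act, if_pos (by norm_num)]

/-- The action `a ↦ o(a)|_{M(0)}` as a linear map `V →ₗ End (M(0))`. -/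
noncomputable def psi (A : AdmMod d M) : V →ₗ[ℂ] Module.End ℂ (A.gr 0) where
  toFun v :=
    { toFun := fun w => ⟨A.toWeakMod.o v (w : M), A.o_mem v w.2⟩
      map_add' := fun w₁ w₂ => Subtype.ext (by
        simp only [Submodule.coe_add]
        exact A.toWeakMod.o_add_right v _ _)
      map_smul' := fun c w => Subtype.ext (by
        simp only [SetLike.val_smul, RingHom.id_apply]
        exact A.toWeakMod.o_smul_right v c _) }
  map_add' x y := by
    apply LinearMap.ext
    intro w
    apply Subtype.ext
    simp only [LinearMap.coe_mk, AddHom.coe_mk, LinearMap.add_apply, Submodule.coe_add]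
    exact A.toWeakMod.o_add_left x y _
  map_smul' c x := by
    apply LinearMap.ext
    intro w
    apply Subtype.ext
    simp only [LinearMap.coe_mk, AddHom.coe_mk, RingHom.id_apply, LinearMap.smul_apply,
      SetLike.val_smul]
    exact A.toWeakMod.o_smul_left c x _

lemma psi_coe (A : AdmMod d M) (v : V) (w : A.gr 0) :
    ((A.psi v w : A.gr 0) : M) = A.toWeakMod.o v (w : M) := rfl

end AdmMod
/-- `o((L(-1)+L(0))v) = 0` on an admissible module, and `a ↦ o(a)|_{M(0)}`
induces an algebra homomorphism `A(V) → End(M(0))`. -/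
theorem stmt5 {M : Type} [AddCommGroup M] [Module ℂ M] (d : VOA V) (A : AdmMod d M) :
    (∀ (v : V) (w : M),
        A.toWeakMod.o (d.mode d.conformal 0 v + d.mode d.conformal 1 v) w = 0) ∧
    ∃ φ : (V ⧸ d.Ozhu) →ₗ[ℂ] Module.End ℂ (A.gr 0),
      (∀ (v : V) (w : A.gr 0), ((φ (d.Ozhu.mkQ v)) w : M) = A.toWeakMod.o v (w : M)) ∧
      (∀ u v : V, φ (d.Ozhu.mkQ (d.star u v)) = φ (d.Ozhu.mkQ u) * φ (d.Ozhu.mkQ v)) ∧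
      φ (d.Ozhu.mkQ d.vacuum) = 1 := by
  constructor
  · -- Part 1 : `o((L(-1)+L(0))v) = 0`
    intro v w
    have hdecomp : d.mode d.conformal 0 v + d.mode d.conformal 1 v
        = ∑ n ∈ d.psupp v,
            (d.mode d.conformal 0 (d.proj n v) + d.mode d.conformal 1 (d.proj n v)) := by
      conv_lhs => rw [← d.sum_proj (d.psupp v) (fun t ht => d.psupp_spec ht)]
      rw [map_sum, map_sum, ← Finset.sum_add_distrib]
    rw [hdecomp, ← A.toWeakMod.oLM_apply, map_sum]
    apply Finset.sum_eq_zero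
    intro n _
    have hmem1 : d.mode d.conformal 0 (d.proj n v) ∈ d.grading (n + 1) := by
      have h := d.grading_mode 2 n 0 d.conformal (d.proj n v) d.conformal_mem (d.proj_mem n v)
      rwa [show (2 : ℤ) + n - 0 - 1 = n + 1 by ring] at h
    rw [A.toWeakMod.oLM_apply, A.toWeakMod.o_add_left,
      A.toWeakMod.o_homog hmem1, show (n : ℤ) + 1 - 1 = n by ring,
      A.toWeakMod.act_deriv,
      d.L0_eigen n (d.proj n v) (d.proj_mem n v), A.toWeakMod.o_smul_left,
      A.toWeakMod.o_homog (d.proj_mem n v), ← add_smul]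
    norm_num
  · -- Part 2 : the induced homomorphism
    have hker : d.Ozhu ≤ LinearMap.ker A.psi := by
      rw [VOA.Ozhu, Submodule.span_le]
      rintro x ⟨u, v, rfl⟩
      rw [SetLike.mem_coe, LinearMap.mem_ker]
      apply LinearMap.ext
      intro w
      apply Subtype.ext
      rw [A.psi_coe]
      simpa using A.o_circ u v w.2
    refine ⟨d.Ozhu.liftQ A.psi hker, ?_, ?_, ?_⟩
    · intro v w
      rw [Submodule.mkQ_apply, Submodule.liftQ_apply]
      rfl
    · intro u v
      rw [Submodule.mkQ_apply, Submodule.mkQ_apply, Submodule.mkQ_apply,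
        Submodule.liftQ_apply, Submodule.liftQ_apply, Submodule.liftQ_apply]
      apply LinearMap.ext
      intro w
      apply Subtype.ext
      rw [A.psi_coe]
      exact A.o_star u v w.2
    · rw [Submodule.mkQ_apply, Submodule.liftQ_apply]
      apply LinearMap.ext
      intro w
      apply Subtype.ext
      rw [A.psi_coe]
      exact A.o_vacuum _
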